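/- arXiv:2505.03078 — 6 statements merged into one kernel-verified Lean document; each statement's English description precedes it below -/
import Mathlib

section
/- In the coevolutionary model with homogeneous coordinating agents (ε = +1, λ ∈ (0,1), β ∈ (0,1), row-stochastic W and A), the consensus configuration z* with x_i* = 1 and y_i* = 1 for all i is a Nash equilibrium: for every agent i, the payoff f_i((x_i, y_i), z*_{-i}) given in equation (8) with all other agents at (1,1) is maximized over (x_i, y_i) ∈ {−1,+1}×[−1,1] at (x_i, y_i) = (1, 1). -/
/-!
With every neighbour at `(1, 1)`, the coordination reward of agent `i` is nondecreasing in `x_i`,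
so `x_i = 1` maximizes it, while both quadratic disagreement penalties are nonnegative and vanish
at `(x_i, y_i) = (1, 1)`.
-/

open Finset

lemma sum_coordination_le_of_le_one {n : ℕ} {a : Fin n → ℝ} {α x : ℝ}
    (ha : ∀ j, 0 ≤ a j) (hα : -1 ≤ α) (hx : x ≤ 1) :
    ∑ j, a j * ((1 - x) * (1 - 1) + (1 + α) * (1 + 1) * (1 + x)) ≤
      ∑ j, a j * ((1 - 1) * (1 - 1) + (1 + α) * (1 + 1) * (1 + 1)) :=
  sum_le_sum fun j _ => mul_le_mul_of_nonneg_left (by nlinarith) (ha j)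

lemma sum_mul_sq_nonneg {n : ℕ} {w : Fin n → ℝ} (hw : ∀ j, 0 ≤ w j) (t : ℝ) :
    0 ≤ ∑ j, w j * t ^ 2 :=
  sum_nonneg fun j _ => mul_nonneg (hw j) (sq_nonneg t)

theorem consensus_is_nash_coordinating_general
    (n : ℕ) (a w : Fin n → ℝ) (lam β α : ℝ)
    (ha : ∀ j, 0 ≤ a j) (hw : ∀ j, 0 ≤ w j)
    (hlam : lam ∈ Set.Ioo (0 : ℝ) 1) (hβ : β ∈ Set.Ioo (0 : ℝ) 1) (hα : 0 ≤ α)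
    (f : ℝ → ℝ → ℝ)
    (hf : ∀ xi yi : ℝ, f xi yi =
      (lam * (1 - β) / 4) * ∑ j, a j * ((1 - xi) * (1 - 1) + (1 + α) * (1 + 1) * (1 + xi))
      - (1 / 2) * (1 - lam) * β * ∑ j, w j * (yi - 1) ^ 2
      - (1 / 2) * lam * β * (yi - xi) ^ 2) :
    ∀ xi : ℝ, (xi = 1 ∨ xi = -1) → ∀ yi ∈ Set.Icc (-1 : ℝ) 1,
      f xi yi ≤ f 1 1 := by
  intro xi hxi yi _
  obtain ⟨hlam0, hlam1⟩ := hlam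
  obtain ⟨hβ0, hβ1⟩ := hβ
  have hx : xi ≤ 1 := by rcases hxi with h | h <;> linarith
  have hreward : 0 ≤ lam * (1 - β) / 4 := by nlinarith
  have hpenalty : 0 ≤ (1 / 2) * (1 - lam) * β := by nlinarith
  have hcoord := mul_le_mul_of_nonneg_left
    (sum_coordination_le_of_le_one ha (by linarith : -1 ≤ α) hx) hreward
  have hopinion := mul_nonneg hpenalty (sum_mul_sq_nonneg hw (yi - 1))
  have hself : 0 ≤ (1 / 2) * lam * β * (yi - xi) ^ 2 := by positivity
  rw [hf, hf]
  simp only [sub_self, mul_zero, zero_add, zero_pow two_ne_zero, sum_const_zero] at hcoord ⊢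
  linarith

/-- With homogeneous coordinating agents, the all-ones consensus
is a Nash equilibrium: with all other agents at `(1,1)`, the payoff of agent `i`
is maximized over `{-1,+1} × [-1,1]` at `(1,1)`. -/
theorem consensus_is_nash_coordinating
    (n : ℕ) (a w : Fin n → ℝ) (lam β α : ℝ)
    (ha : ∀ j, 0 ≤ a j) (hw : ∀ j, 0 ≤ w j)
    (hasum : ∑ j, a j = 1) (hwsum : ∑ j, w j = 1)
    (hlam : lam ∈ Set.Ioo (0 : ℝ) 1) (hβ : β ∈ Set.Ioo (0 : ℝ) 1) (hα : 0 ≤ α)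
    (f : ℝ → ℝ → ℝ)
    (hf : ∀ xi yi : ℝ, f xi yi =
      (lam * (1 - β) / 4) * ∑ j, a j * ((1 - xi) * (1 - 1) + (1 + α) * (1 + 1) * (1 + xi))
      - (1 / 2) * (1 - lam) * β * ∑ j, w j * (yi - 1) ^ 2
      - (1 / 2) * lam * β * (yi - xi) ^ 2) :
    ∀ xi : ℝ, (xi = 1 ∨ xi = -1) → ∀ yi ∈ Set.Icc (-1 : ℝ) 1,
      f xi yi ≤ f 1 1 :=
  consensus_is_nash_coordinating_general n a w lam β α ha hw hlam hβ hα f hf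
end

section
/- Let p = 2λβ(1−λ) and q = 2λ(1−β) with λ, β ∈ (0,1). Suppose W is row-stochastic, y_j ∈ (0,1] for j ∈ S, y_k ∈ [−1,0) for k ∈ V∖S, x_j = +1 for j ∈ S, x_k = −1 for k ∉ S, and Σ_{j∈S} w_{ij} ≥ 1 − q/(2(p+q)) for a given i ∈ S. Then δ_i := p·[Σ_{j∈S} w_{ij} y_j + Σ_{k∉S} w_{ik} y_k] + (q/2)·[Σ_{j∈S} w_{ij} − Σ_{k∉S} w_{ik}] ≥ 0. -/
/-!
Split the weight of agent `i` as `s = ∑_{j∈S} w j` and `t = ∑_{k∉S} w k = 1 - s`. The `S`-part of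
the weighted opinion sum is nonnegative and the rest is at least `-t`, so with `p ≥ 0` the
discriminant is at least `p (-t) + (q/2)(1 - 2t) = q/2 - (p + q) t`, and the threshold on `s` is
exactly `t ≤ q / (2 (p + q))`.
-/

theorem neg_sum_le_sum_mul {ι : Type*} (s : Finset ι) (w y : ι → ℝ)
    (hw : ∀ i ∈ s, 0 ≤ w i) (hy : ∀ i ∈ s, -1 ≤ y i) :
    -∑ i ∈ s, w i ≤ ∑ i ∈ s, w i * y i := by
  rw [← Finset.sum_neg_distrib]
  refine Finset.sum_le_sum fun i hi => ?_
  nlinarith [hw i hi, hy i hi]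

theorem half_sub_mul_le_mul_add_add_mul_sub {p q a b s t : ℝ} (hp : 0 ≤ p) (ha : 0 ≤ a)
    (hb : -t ≤ b) (hst : s + t = 1) :
    q / 2 - (p + q) * t ≤ p * (a + b) + q / 2 * (s - t) := by
  have hs : s = 1 - t := by linarith
  subst hs
  nlinarith [mul_le_mul_of_nonneg_left hb hp, mul_nonneg hp ha]

theorem mul_le_half_of_one_sub_div_le {p q s t : ℝ} (hpq : 0 < p + q)
    (hs : 1 - q / (2 * (p + q)) ≤ s) (hst : s + t = 1) :
    (p + q) * t ≤ q / 2 := by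
  have ht : t ≤ q / (2 * (p + q)) := by linarith
  rw [le_div_iff₀ (by positivity)] at ht
  linarith

/-- Key inequality for consensus from polarization (coordinating
agents): if `∑_{j∈S} w j ≥ 1 - q/(2(p+q))`, the discriminant is nonnegative. -/
theorem discriminant_nonneg_in_S
    (n : ℕ) (w : Fin n → ℝ) (y : Fin n → ℝ) (S : Finset (Fin n)) (lam β : ℝ)
    (hlam : lam ∈ Set.Ioo (0 : ℝ) 1) (hβ : β ∈ Set.Ioo (0 : ℝ) 1)
    (hw : ∀ j, 0 ≤ w j) (hwsum : ∑ j, w j = 1)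
    (hyS : ∀ j ∈ S, y j ∈ Set.Ioc (0 : ℝ) 1)
    (hyNS : ∀ k ∉ S, y k ∈ Set.Ico (-1 : ℝ) 0)
    (hcoh : 1 - (2 * lam * (1 - β)) /
        (2 * (2 * lam * β * (1 - lam) + 2 * lam * (1 - β))) ≤ ∑ j ∈ S, w j) :
    0 ≤ (2 * lam * β * (1 - lam)) *
          (∑ j ∈ S, w j * y j + ∑ k ∈ Sᶜ, w k * y k)
        + (2 * lam * (1 - β) / 2) * (∑ j ∈ S, w j - ∑ k ∈ Sᶜ, w k) := by
  obtain ⟨hlam0, hlam1⟩ := hlam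
  obtain ⟨hβ0, hβ1⟩ := hβ
  have hp : 0 ≤ 2 * lam * β * (1 - lam) := by
    have := sub_pos.2 hlam1
    positivity
  have hq : 0 < 2 * lam * (1 - β) := by
    have := sub_pos.2 hβ1
    positivity
  have hst : ∑ j ∈ S, w j + ∑ k ∈ Sᶜ, w k = 1 := (Finset.sum_add_sum_compl S w).trans hwsum
  have hin : 0 ≤ ∑ j ∈ S, w j * y j :=
    Finset.sum_nonneg fun j hj => mul_nonneg (hw j) (hyS j hj).1.le
  have hout : -∑ k ∈ Sᶜ, w k ≤ ∑ k ∈ Sᶜ, w k * y k :=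
    neg_sum_le_sum_mul Sᶜ w y (fun k _ => hw k)
      fun k hk => (hyNS k (Finset.mem_compl.1 hk)).1
  linarith [half_sub_mul_le_mul_add_add_mul_sub (q := 2 * lam * (1 - β)) hp hin hout hst,
    mul_le_half_of_one_sub_div_le (by linarith) hcoh hst]
end

section
/- Let p = 2λβ(1−λ) and q = 2λ(1−β) with λ, β ∈ (0,1). Suppose W is row-stochastic, y_j ∈ (0,1] for j ∈ S, y_k ∈ [−1,0) for k ∈ V∖S, and for a given i ∈ V∖S it holds Σ_{k∈V∖S} w_{ik} < q/(2(p+q)). Then δ_i := p·[Σ_{j∈S} w_{ij} y_j + Σ_{k∉S} w_{ik} y_k] + (q/2)·[Σ_{j∈S} w_{ij} − Σ_{k∉S} w_{ik}] > 0. -/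
/-!
Bounding the opinions below by `0` on `S` and by `-1` off `S`, and using
`∑_{j∈S} w j = 1 - ∑_{k∉S} w k`, gives `δ ≥ q/2 - (p + q) ∑_{k∉S} w k`, which is positive
exactly under the assumed bound on the outside weight.
-/

open Finset

lemma Finset.neg_sum_le_sum_mul_of_neg_one_le {ι : Type*} (s : Finset ι) {w y : ι → ℝ}
    (hw : ∀ i ∈ s, 0 ≤ w i) (hy : ∀ i ∈ s, -1 ≤ y i) :
    -∑ i ∈ s, w i ≤ ∑ i ∈ s, w i * y i := by
  rw [← sum_neg_distrib]
  refine sum_le_sum fun i hi => ?_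
  simpa using mul_le_mul_of_nonneg_left (hy i hi) (hw i hi)

/-- `a`, `b`: total weight inside and outside `S`; `A`, `B`: the corresponding weighted
opinion sums. -/
lemma discriminant_pos_of_outside_weight_lt {p q a b A B : ℝ} (hp : 0 < p) (hq : 0 < q)
    (hab : a + b = 1) (hA : 0 ≤ A) (hB : -b ≤ B) (hb : b < q / (2 * (p + q))) :
    0 < p * (A + B) + q / 2 * (a - b) := by
  have hb' : b * (2 * (p + q)) < q := (lt_div_iff₀ (by positivity)).mp hb
  calc 0 < q / 2 - b * (p + q) := by linarith
    _ = p * -b + q / 2 * (a - b) := by rw [show a = 1 - b by linarith]; ring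
    _ ≤ p * (A + B) + q / 2 * (a - b) := by gcongr; linarith

/-- Key inequality for consensus from polarization (coordinating
agents), agent outside `S`: if `∑_{k∉S} w k < q/(2(p+q))`, the discriminant is
strictly positive. -/
theorem discriminant_pos_outside_S
    (n : ℕ) (w : Fin n → ℝ) (y : Fin n → ℝ) (S : Finset (Fin n)) (lam β : ℝ)
    (hlam : lam ∈ Set.Ioo (0 : ℝ) 1) (hβ : β ∈ Set.Ioo (0 : ℝ) 1)
    (hw : ∀ j, 0 ≤ w j) (hwsum : ∑ j, w j = 1)
    (hyS : ∀ j ∈ S, y j ∈ Set.Ioc (0 : ℝ) 1)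
    (hyNS : ∀ k ∉ S, y k ∈ Set.Ico (-1 : ℝ) 0)
    (hdiff : ∑ k ∈ Sᶜ, w k <
      (2 * lam * (1 - β)) / (2 * (2 * lam * β * (1 - lam) + 2 * lam * (1 - β)))) :
    0 < (2 * lam * β * (1 - lam)) *
          (∑ j ∈ S, w j * y j + ∑ k ∈ Sᶜ, w k * y k)
        + (2 * lam * (1 - β) / 2) * (∑ j ∈ S, w j - ∑ k ∈ Sᶜ, w k) := by
  obtain ⟨hlam0, hlam1⟩ := hlam
  obtain ⟨hβ0, hβ1⟩ := hβ
  have hp : 0 < 2 * lam * β * (1 - lam) := by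
    have := sub_pos.mpr hlam1
    positivity
  have hq : 0 < 2 * lam * (1 - β) := by
    have := sub_pos.mpr hβ1
    positivity
  exact discriminant_pos_of_outside_weight_lt hp hq ((sum_add_sum_compl S w).trans hwsum)
    (sum_nonneg fun j hj => mul_nonneg (hw j) (hyS j hj).1.le)
    (neg_sum_le_sum_mul_of_neg_one_le _ (fun k _ => hw k)
      fun k hk => (hyNS k (mem_compl.mp hk)).1) hdiff
end

section
/- For the anti-coordinating coevolutionary model (ε = −1) with homogeneous parameters λ, β ∈ (0,1), α ≥ 0, and row-stochastic W, the state z* with x_i* = 1, y_i* = 1 for all i is a fixed point of the update rule in equation (11) (i.e., for every i, δ_i(z*) > 0, hence S(δ_i(z*)) = 1 and the opinion update returns 1) if and only if Σ_{j∈V} a_{ij} < 2(1−λ)β / ((1−β)(1+α)) for every i, where δ_i(z*) = −[λ(1−β)/2]·Σ_j a_{ij}(2+2α) + 2(1−λ)λβ·Σ_j w_{ij}. -/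
open Finset

theorem anticoordination_discriminant_pos_iff {lam β α S : ℝ}
    (hlam : 0 < lam) (hβ : β < 1) (hα : -1 < α) :
    0 < -(lam * (1 - β) / 2) * (S * (2 + 2 * α)) + 2 * (1 - lam) * lam * β ↔
      S < 2 * (1 - lam) * β / ((1 - β) * (1 + α)) := by
  have hfactor : -(lam * (1 - β) / 2) * (S * (2 + 2 * α)) + 2 * (1 - lam) * lam * β
      = lam * (2 * (1 - lam) * β - S * ((1 - β) * (1 + α))) := by ring
  have hc : 0 < (1 - β) * (1 + α) := mul_pos (by linarith) (by linarith)
  rw [hfactor, mul_pos_iff_of_pos_left hlam, sub_pos, lt_div_iff₀ hc]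

theorem anticoordination_consensus_fixed_point_iff_general
    (n : ℕ) (A W : Fin n → Fin n → ℝ) (lam β α : ℝ)
    (hWrow : ∀ i, ∑ j, W i j = 1)
    (hlam : lam ∈ Set.Ioo (0 : ℝ) 1) (hβ : β ∈ Set.Ioo (0 : ℝ) 1) (hα : 0 ≤ α) :
    (∀ i, 0 < -(lam * (1 - β) / 2) * ∑ j, A i j * (2 + 2 * α)
            + 2 * (1 - lam) * lam * β * ∑ j, W i j) ↔
    (∀ i, ∑ j, A i j < 2 * (1 - lam) * β / ((1 - β) * (1 + α))) := by
  refine forall_congr' fun i => ?_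
  rw [hWrow i, mul_one, ← sum_mul]
  exact anticoordination_discriminant_pos_iff hlam.1 hβ.2 (by linarith)

/-- For anti-coordinating agents, the all-ones state is a fixed
point of the update rule (i.e. `δ_i > 0` for every `i`) iff
`∑ j, a i j < 2(1-λ)β/((1-β)(1+α))` for every `i`. -/
theorem anticoordination_consensus_fixed_point_iff
    (n : ℕ) (A W : Fin n → Fin n → ℝ) (lam β α : ℝ)
    (hA : ∀ i j, 0 ≤ A i j) (hW : ∀ i j, 0 ≤ W i j)
    (hWrow : ∀ i, ∑ j, W i j = 1)
    (hlam : lam ∈ Set.Ioo (0 : ℝ) 1) (hβ : β ∈ Set.Ioo (0 : ℝ) 1) (hα : 0 ≤ α) :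
    (∀ i, 0 < -(lam * (1 - β) / 2) * ∑ j, A i j * (2 + 2 * α)
            + 2 * (1 - lam) * lam * β * ∑ j, W i j) ↔
    (∀ i, ∑ j, A i j < 2 * (1 - lam) * β / ((1 - β) * (1 + α))) :=
  anticoordination_consensus_fixed_point_iff_general n A W lam β α hWrow hlam hβ hα
end

section
/- Let λ, β ∈ (0,1) with β < 1/(2−λ), p = 2λβ(1−λ), q = 2λ(1−β). Suppose y_j ∈ (0,1] for j ∈ S, y_k ∈ [−1,0) for k ∉ S, W row-stochastic, and for a given i ∉ S: (1−2λ)/(1−λ) < Σ_{k∉S} w_{ik} < (1/2)(1 + p/(p−q)). Then δ_i = p·[Σ_{j∈S} w_{ij} y_j + Σ_{k∉S} w_{ik} y_k] − (q/2)·[Σ_{j∈S} w_{ij} − Σ_{k∉S} w_{ik}] < 0. -/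
/-!
Since `y ≤ 1` on `S` and `y ≤ 0` off `S`, the discriminant is at most its value at `y = 𝟙_S`,
which is the affine function `-(p - q) t + p - q/2` of the outside weight `t = ∑_{k ∉ S} w_k`.
The hypothesis `β < 1/(2 - λ)` says `p < q`, so this function is increasing in `t` and vanishes
exactly at `t = (1 + p/(p - q))/2`; below that threshold it is negative.
-/

open Finset

lemma sum_mul_le_sum_of_le_one {ι : Type*} {s : Finset ι} {w y : ι → ℝ}
    (hw : ∀ j ∈ s, 0 ≤ w j) (hy : ∀ j ∈ s, y j ≤ 1) :
    ∑ j ∈ s, w j * y j ≤ ∑ j ∈ s, w j :=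
  sum_le_sum fun j hj => mul_le_of_le_one_right (hw j hj) (hy j hj)

lemma sum_mul_nonpos_of_nonpos {ι : Type*} {s : Finset ι} {w y : ι → ℝ}
    (hw : ∀ j ∈ s, 0 ≤ w j) (hy : ∀ j ∈ s, y j ≤ 0) :
    ∑ j ∈ s, w j * y j ≤ 0 :=
  sum_nonpos fun j hj => mul_nonpos_of_nonneg_of_nonpos (hw j hj) (hy j hj)

lemma anticoordination_p_sub_q_neg {lam β : ℝ} (hlam₀ : 0 < lam) (hlam₂ : lam < 2)
    (hbl : β < 1 / (2 - lam)) :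
    2 * lam * β * (1 - lam) - 2 * lam * (1 - β) < 0 := by
  have hβlam : β * (2 - lam) < 1 := (lt_div_iff₀ (by linarith)).1 hbl
  have hfactor : 2 * lam * β * (1 - lam) - 2 * lam * (1 - β) = 2 * lam * (β * (2 - lam) - 1) := by
    ring
  rw [hfactor]
  exact mul_neg_of_pos_of_neg (by linarith) (by linarith)

lemma discriminant_le_of_bounds {p q A B t : ℝ} (hp : 0 ≤ p) (hA : A ≤ 1 - t) (hB : B ≤ 0) :
    p * (A + B) - q / 2 * ((1 - t) - t) ≤ -(p - q) * t + p - q / 2 := by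
  nlinarith

lemma neg_sub_mul_add_sub_half_neg {p q t : ℝ} (hpq : p - q < 0)
    (ht : t < 1 / 2 * (1 + p / (p - q))) :
    -(p - q) * t + p - q / 2 < 0 := by
  have hthreshold : 1 / 2 * (1 + p / (p - q)) * (p - q) = p - q / 2 := by
    field_simp [hpq.ne]
    ring
  have := mul_lt_mul_of_neg_right ht hpq
  linarith

theorem anticoordination_discriminant_neg_outside_S_general
    (n : ℕ) (w : Fin n → ℝ) (y : Fin n → ℝ) (S : Finset (Fin n)) (lam β : ℝ)
    (hlam : lam ∈ Set.Ioo (0 : ℝ) 1) (hβ : β ∈ Set.Ioo (0 : ℝ) 1)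
    (hbl : β < 1 / (2 - lam))
    (hw : ∀ j, 0 ≤ w j) (hwsum : ∑ j, w j = 1)
    (hyS : ∀ j ∈ S, y j ∈ Set.Ioc (0 : ℝ) 1)
    (hyNS : ∀ k ∉ S, y k ∈ Set.Ico (-1 : ℝ) 0)
    (hhi : ∑ k ∈ Sᶜ, w k < (1 / 2) * (1 + (2 * lam * β * (1 - lam)) /
      (2 * lam * β * (1 - lam) - 2 * lam * (1 - β)))) :
    (2 * lam * β * (1 - lam)) *
          (∑ j ∈ S, w j * y j + ∑ k ∈ Sᶜ, w k * y k)
        - (2 * lam * (1 - β) / 2) * (∑ j ∈ S, w j - ∑ k ∈ Sᶜ, w k) < 0 := by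
  obtain ⟨hlam₀, hlam₁⟩ := hlam
  have hp : 0 ≤ 2 * lam * β * (1 - lam) := by
    have : 0 < 1 - lam := by linarith
    have := hβ.1
    positivity
  have hpq := anticoordination_p_sub_q_neg hlam₀ (by linarith) hbl
  have hinside : ∑ j ∈ S, w j = 1 - ∑ k ∈ Sᶜ, w k := by
    rw [← hwsum, ← sum_add_sum_compl S w]
    ring
  have hA := sum_mul_le_sum_of_le_one (fun j _ => hw j) (fun j hj => (hyS j hj).2)
  have hB := sum_mul_nonpos_of_nonpos (s := Sᶜ) (y := y) (fun k _ => hw k)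
    fun k hk => (hyNS k (mem_compl.1 hk)).2.le
  rw [hinside] at hA ⊢
  exact (discriminant_le_of_bounds hp hA hB).trans_lt (neg_sub_mul_add_sub_half_neg hpq hhi)

/-- Anti-coordination discriminant of an agent `i ∉ S` is
strictly negative under the polarization-invariance condition. -/
theorem anticoordination_discriminant_neg_outside_S
    (n : ℕ) (w : Fin n → ℝ) (y : Fin n → ℝ) (S : Finset (Fin n)) (lam β : ℝ)
    (hlam : lam ∈ Set.Ioo (0 : ℝ) 1) (hβ : β ∈ Set.Ioo (0 : ℝ) 1)
    (hbl : β < 1 / (2 - lam))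
    (hw : ∀ j, 0 ≤ w j) (hwsum : ∑ j, w j = 1)
    (hyS : ∀ j ∈ S, y j ∈ Set.Ioc (0 : ℝ) 1)
    (hyNS : ∀ k ∉ S, y k ∈ Set.Ico (-1 : ℝ) 0)
    (hlo : (1 - 2 * lam) / (1 - lam) < ∑ k ∈ Sᶜ, w k)
    (hhi : ∑ k ∈ Sᶜ, w k < (1 / 2) * (1 + (2 * lam * β * (1 - lam)) /
      (2 * lam * β * (1 - lam) - 2 * lam * (1 - β)))) :
    (2 * lam * β * (1 - lam)) *
          (∑ j ∈ S, w j * y j + ∑ k ∈ Sᶜ, w k * y k)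
        - (2 * lam * (1 - β) / 2) * (∑ j ∈ S, w j - ∑ k ∈ Sᶜ, w k) < 0 :=
  anticoordination_discriminant_neg_outside_S_general n w y S lam β hlam hβ hbl hw hwsum hyS hyNS
    hhi
end

section
/- Consider the potential function Φ(z) = −Σ_i Σ_{j≠i} η·(a_{ij}/2)·[(1−x_j)(1−x_i) − (1+α)(1+x_j)(1+x_i)] − (1/2)·Σ_i Σ_j (w_{ij}/2)(y_i−y_j)² − (1/2)·Σ_k (λ/(1−λ))·(x_k − y_k)², with η = λ(1−β)/(4β(1−λ)), symmetric A and W, and homogeneous λ, β ∈ (0,1). For the anti-coordinating game (ε = −1) with payoffs (8), if a single agent i changes opinion y_i to y_i' (all else fixed) and f_i strictly increases, then Φ strictly increases. -/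
/-!
An opinion deviation of agent `i` leaves the coupling term of `Φ` untouched and changes the
other two terms only through `y_i`. By the symmetry of `W`, the network term changes by exactly
twice agent `i`'s row, so `Φ` changes by `Δf_i / ((1 - λ) β)`.
-/

open Finset Function

section UpdateSums

variable {ι R : Type*} [Fintype ι] [DecidableEq ι] [CommRing R]

theorem sum_apply_update_sub_sum (g : ι → R → R) (y : ι → R) (i : ι) (t : R) :
    ∑ k, g k (update y i t k) - ∑ k, g k (y k) = g i t - g i (y i) := by
  rw [← sum_sub_distrib, sum_eq_single i (fun k _ hk => by rw [update_of_ne hk, sub_self])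
    (fun h => absurd (mem_univ i) h), update_self]

theorem sum_sum_eq_two_mul_sum_of_symm {g : ι → ι → R} (i : ι)
    (hsymm : ∀ p q, g p q = g q p) (hsupp : ∀ p q, p ≠ i → q ≠ i → g p q = 0)
    (hdiag : g i i = 0) :
    ∑ p, ∑ q, g p q = 2 * ∑ q, g i q := by
  have hcol : ∀ p ∈ univ.erase i, ∑ q, g p q = g i p := fun p hp => by
    rw [sum_eq_single i (fun q _ hq => hsupp p q (ne_of_mem_erase hp) hq)
      (fun h => absurd (mem_univ i) h), hsymm]
  rw [← add_sum_erase _ _ (mem_univ i), sum_congr rfl hcol,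
    ← add_sum_erase _ (g i) (mem_univ i), hdiag]
  ring

theorem sum_sum_mul_sq_update_sub_sum_sum {W : ι → ι → R} (hW : ∀ p q, W p q = W q p)
    (y : ι → R) (i : ι) (t : R) :
    ∑ p, ∑ q, W p q * (update y i t p - update y i t q) ^ 2
      - ∑ p, ∑ q, W p q * (y p - y q) ^ 2
      = 2 * (∑ q, W i q * (t - update y i t q) ^ 2
        - ∑ q, W i q * (y i - y q) ^ 2) := by
  set g : ι → ι → R := fun p q =>
    W p q * ((update y i t p - update y i t q) ^ 2 - (y p - y q) ^ 2)
  have hg : ∑ p, ∑ q, g p q = 2 * ∑ q, g i q := by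
    refine sum_sum_eq_two_mul_sum_of_symm i (fun p q => ?_) (fun p q hp hq => ?_) ?_
    · simp only [g, hW p q]; ring
    · simp only [g, update_of_ne hp, update_of_ne hq, sub_self, mul_zero]
    · simp only [g, sub_self]; ring
  simp only [g, mul_sub, sum_sub_distrib, update_self] at hg
  linear_combination hg

end UpdateSums

theorem potential_increases_on_opinion_deviation_general
    (n : ℕ) (A W : Fin n → Fin n → ℝ) (lam β α : ℝ)
    (hWsym : ∀ i j, W i j = W j i)
    (hlam : lam ∈ Set.Ioo (0 : ℝ) 1) (hβ : β ∈ Set.Ioo (0 : ℝ) 1)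
    (Φ : (Fin n → ℝ) → (Fin n → ℝ) → ℝ)
    (hΦ : ∀ x y : Fin n → ℝ, Φ x y =
      -(∑ i, ∑ j ∈ ({i} : Finset (Fin n))ᶜ,
          (lam * (1 - β) / (4 * β * (1 - lam))) * (A i j / 2) *
            ((1 - x j) * (1 - x i) - (1 + α) * (1 + x j) * (1 + x i)))
      - (1 / 2) * ∑ i, ∑ j, (W i j / 2) * (y i - y j) ^ 2
      - (1 / 2) * ∑ k, (lam / (1 - lam)) * (x k - y k) ^ 2)
    (f : Fin n → (Fin n → ℝ) → (Fin n → ℝ) → ℝ)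
    (hfdef : ∀ (i : Fin n) (x y : Fin n → ℝ), f i x y =
      -(lam * (1 - β) / 4) * ∑ j, A i j *
          ((1 - x i) * (1 - x j) + (1 + α) * (1 + x j) * (1 + x i))
      - (1 / 2) * (1 - lam) * β * ∑ j, W i j * (y i - y j) ^ 2
      - (1 / 2) * lam * β * (y i - x i) ^ 2)
    (i : Fin n) (x y : Fin n → ℝ) (yi' : ℝ)
    (hinc : f i x y < f i x (Function.update y i yi')) :
    Φ x y < Φ x (Function.update y i yi') := by
  obtain ⟨-, hlam1⟩ := hlam
  obtain ⟨hβ0, -⟩ := hβ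
  have hhalf : ∀ z : Fin n → ℝ, ∑ p, ∑ q, W p q / 2 * (z p - z q) ^ 2
      = (1 / 2) * ∑ p, ∑ q, W p q * (z p - z q) ^ 2 := fun z => by
    simp only [mul_sum]
    exact sum_congr rfl fun _ _ => sum_congr rfl fun _ _ => by ring
  have hdir := sum_sum_mul_sq_update_sub_sum_sum hWsym y i yi'
  have hsep := sum_apply_update_sub_sum (fun k t => lam / (1 - lam) * (x k - t) ^ 2) y i yi'
  have key : (1 - lam) * β * (Φ x (update y i yi') - Φ x y)
      = f i x (update y i yi') - f i x y := by
    rw [hΦ, hΦ, hfdef, hfdef, hhalf, hhalf]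
    simp only [update_self]
    have hc : (1 - lam) * (lam / (1 - lam)) = lam := mul_div_cancel₀ lam (by linarith)
    linear_combination (-(1 / 4) * (1 - lam) * β) * hdir - (1 / 2) * (1 - lam) * β * hsep
      - (1 / 2) * β * ((x i - yi') ^ 2 - (x i - y i) ^ 2) * hc
  have hscale : 0 < (1 - lam) * β := mul_pos (by linarith) hβ0
  exact sub_pos.mp (pos_of_mul_pos_right (key ▸ sub_pos.mpr hinc) hscale.le)

/-- Generalized ordinal potential property of `Φ` for
opinion deviations in the anti-coordinating game: a unilateral opinion change
that strictly increases `f_i` strictly increases `Φ`. -/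
theorem potential_increases_on_opinion_deviation
    (n : ℕ) (A W : Fin n → Fin n → ℝ) (lam β α : ℝ)
    (hA : ∀ i j, 0 ≤ A i j) (hW : ∀ i j, 0 ≤ W i j)
    (hAsym : ∀ i j, A i j = A j i) (hWsym : ∀ i j, W i j = W j i)
    (hlam : lam ∈ Set.Ioo (0 : ℝ) 1) (hβ : β ∈ Set.Ioo (0 : ℝ) 1) (hα : 0 ≤ α)
    (Φ : (Fin n → ℝ) → (Fin n → ℝ) → ℝ)
    (hΦ : ∀ x y : Fin n → ℝ, Φ x y =
      -(∑ i, ∑ j ∈ ({i} : Finset (Fin n))ᶜ,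
          (lam * (1 - β) / (4 * β * (1 - lam))) * (A i j / 2) *
            ((1 - x j) * (1 - x i) - (1 + α) * (1 + x j) * (1 + x i)))
      - (1 / 2) * ∑ i, ∑ j, (W i j / 2) * (y i - y j) ^ 2
      - (1 / 2) * ∑ k, (lam / (1 - lam)) * (x k - y k) ^ 2)
    (f : Fin n → (Fin n → ℝ) → (Fin n → ℝ) → ℝ)
    (hfdef : ∀ (i : Fin n) (x y : Fin n → ℝ), f i x y =
      -(lam * (1 - β) / 4) * ∑ j, A i j *
          ((1 - x i) * (1 - x j) + (1 + α) * (1 + x j) * (1 + x i))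
      - (1 / 2) * (1 - lam) * β * ∑ j, W i j * (y i - y j) ^ 2
      - (1 / 2) * lam * β * (y i - x i) ^ 2)
    (i : Fin n) (x y : Fin n → ℝ) (yi' : ℝ)
    (hinc : f i x y < f i x (Function.update y i yi')) :
    Φ x y < Φ x (Function.update y i yi') :=
  potential_increases_on_opinion_deviation_general n A W lam β α hWsym hlam hβ Φ hΦ f hfdef i x y
    yi' hinc
end
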